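/- The determinant of the matrix A_k of even size n is odd, i.e., det(A_k) ≡ 1 (mod 2). -/
import Mathlib


/-- `ε_{m,ℓ} = 1` if `m > ℓ`, `-1` otherwise. -/
def eps (m l : ℕ) : ℤ := if l < m then 1 else -1

/-- The skew-symmetric Toeplitz matrix `A_k` of size `n`, with
`(A_k)_{i,j} = ε_{n+i,k+j}` for `i < j` (indices 1-based). -/
def Amat (n k : ℕ) : Matrix (Fin n) (Fin n) ℤ :=
  fun i j =>
    if i < j then eps (n + i.1 + 1) (k + j.1 + 1)
    else if j < i then -(eps (n + j.1 + 1) (k + i.1 + 1))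
    else 0

/-- for `n` even, `det A_k ≡ 1 (mod 2)`. -/
theorem det_Amat_odd (n k : ℕ) (hn : Even n) (hk : k < n) :
    (Amat n k).det % 2 = 1 := by
  have hmap : (Amat n k).map (Int.cast : ℤ → ZMod 2)
      = (1 : Matrix (Fin n) (Fin n) (ZMod 2))
        + Matrix.replicateCol Unit (fun _ => (1 : ZMod 2)) * Matrix.replicateRow Unit (fun _ => (1 : ZMod 2)) := by
    ext i j
    simp only [Matrix.map_apply, Amat, eps, Matrix.add_apply, Matrix.mul_apply,
      Matrix.replicateCol_apply, Matrix.replicateRow_apply, Finset.sum_const, Finset.card_univ,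
      Fintype.card_unit, one_smul, mul_one]
    rcases lt_trichotomy i j with h | h | h
    · rw [if_pos h, Matrix.one_apply_ne h.ne]
      split <;> decide
    · subst h
      simp [Matrix.one_apply_eq]
      decide
    · rw [if_neg (not_lt.mpr h.le), if_pos h, Matrix.one_apply_ne h.ne']
      split <;> decide
  have hdet : ((Amat n k).det : ZMod 2) = 1 := by
    have hrm := RingHom.map_det (Int.castRingHom (ZMod 2)) (Amat n k)
    simp only [RingHom.mapMatrix_apply] at hrm
    rw [show ((Amat n k).det : ZMod 2) = (Int.castRingHom (ZMod 2)) (Amat n k).det from rfl, hrm]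
    show ((Amat n k).map (Int.cast : ℤ → ZMod 2)).det = 1
    rw [hmap, Matrix.det_one_add_replicateCol_mul_replicateRow]
    have : dotProduct (fun _ : Fin n => (1 : ZMod 2)) (fun _ => 1) = (n : ZMod 2) := by
      simp [dotProduct]
    rw [this]
    have : (n : ZMod 2) = 0 := (ZMod.natCast_eq_zero_iff n 2).mpr hn.two_dvd
    rw [this, add_zero]
  have := (ZMod.intCast_eq_intCast_iff ((Amat n k).det) 1 2).mp (by
    simpa using hdet)
  simpa [Int.ModEq] using this
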